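/- arXiv:1401.7895 — 2 statements merged into one kernel-verified Lean document; each statement's English description precedes it below -/
import Mathlib

section
/- (Finitely additive Mukherjee–Summers lemma) Let A be an algebra of subsets of Ω and λ ∈ ba(A)₊ having at least one λ-atom. Then there exists a countable pairwise disjoint collection G₁, G₂, ... of λ-atoms in A such that for every λ-atom B ∈ A there exists n with λ(B Δ Gₙ) = 0. -/
open Set Filter Topology

variable {Ω : Type*}

/-- `𝒜` is an algebra of subsets of `Ω`. -/
def IsAlg (𝒜 : Set (Set Ω)) : Prop :=
  ∅ ∈ 𝒜 ∧ Set.univ ∈ 𝒜 ∧ (∀ A ∈ 𝒜, Aᶜ ∈ 𝒜) ∧ ∀ A ∈ 𝒜, ∀ B ∈ 𝒜, A ∪ B ∈ 𝒜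

/-- bounded finitely additive set function (element of ba(𝒜)). -/
def IsFinAdd (𝒜 : Set (Set Ω)) (μ : Set Ω → ℝ) : Prop :=
  μ ∅ = 0 ∧
  (∀ A ∈ 𝒜, ∀ B ∈ 𝒜, Disjoint A B → μ (A ∪ B) = μ A + μ B) ∧
  ∃ C : ℝ, ∀ A ∈ 𝒜, |μ A| ≤ C

def IsPos (𝒜 : Set (Set Ω)) (μ : Set Ω → ℝ) : Prop := ∀ A ∈ 𝒜, 0 ≤ μ A

def IsCtblAdd (𝒜 : Set (Set Ω)) (μ : Set Ω → ℝ) : Prop :=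
  ∀ A : ℕ → Set Ω, (∀ n, A n ∈ 𝒜) → Pairwise (Function.onFun Disjoint A) →
    (⋃ n, A n) ∈ 𝒜 → HasSum (fun n => μ (A n)) (μ (⋃ n, A n))

/-- total variation of `μ` on `A`. -/
noncomputable def tv (𝒜 : Set (Set Ω)) (μ : Set Ω → ℝ) (A : Set Ω) : ℝ :=
  sSup {x | ∃ B ∈ 𝒜, B ⊆ A ∧ x = μ B - μ (A \ B)}

noncomputable def tvNorm (𝒜 : Set (Set Ω)) (μ : Set Ω → ℝ) : ℝ := tv 𝒜 μ Set.univ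

/-- `ν ≪ μ`, absolute continuity in the ε-δ sense. -/
def AC (𝒜 : Set (Set Ω)) (ν μ : Set Ω → ℝ) : Prop :=
  ∀ ε > (0:ℝ), ∃ δ > (0:ℝ), ∀ E ∈ 𝒜, tv 𝒜 μ E < δ → tv 𝒜 ν E < ε

/-- `μ ⊥ ν`, singularity in the ε sense. -/
def Sing (𝒜 : Set (Set Ω)) (μ ν : Set Ω → ℝ) : Prop :=
  ∀ ε > (0:ℝ), ∃ B ∈ 𝒜, tv 𝒜 μ Bᶜ + tv 𝒜 ν B < ε

/-- normalized total variation `|μ|/(1 ∨ ‖μ‖)`. -/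
noncomputable def nvar (𝒜 : Set (Set Ω)) (μ : Set Ω → ℝ) (A : Set Ω) : ℝ :=
  tv 𝒜 μ A / (1 ⊔ tvNorm 𝒜 μ)

/-- membership in `𝐀(M)`: countable convex combinations of normalized variations. -/
def MemAM (𝒜 : Set (Set Ω)) (M : Set (Set Ω → ℝ)) (m : Set Ω → ℝ) : Prop :=
  ∃ (μ : ℕ → Set Ω → ℝ) (α : ℕ → ℝ),
    (∀ n, μ n ∈ M) ∧ (∀ n, 0 ≤ α n) ∧ HasSum α 1 ∧
    ∀ A : Set Ω, m A = ∑' n, α n * nvar 𝒜 (μ n) A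

/-- membership in `𝐋(M)`. -/
def MemLM (𝒜 : Set (Set Ω)) (M : Set (Set Ω → ℝ)) (ν : Set Ω → ℝ) : Prop :=
  ∃ m, MemAM 𝒜 M m ∧ AC 𝒜 ν m

/-- order on ba(𝒜). -/
def baLE (𝒜 : Set (Set Ω)) (μ ν : Set Ω → ℝ) : Prop := ∀ A ∈ 𝒜, μ A ≤ ν A

/-- λ-completion of 𝒜. -/
def Completion (𝒜 : Set (Set Ω)) (l : Set Ω → ℝ) : Set (Set Ω) :=
  {B | ∀ ε > (0:ℝ), ∃ A ∈ 𝒜, ∃ A' ∈ 𝒜, A ⊆ B ∧ B ⊆ A' ∧ l (A' \ A) < ε}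

/-- the extension `λ̄` to the completion. -/
noncomputable def extOf (𝒜 : Set (Set Ω)) (l : Set Ω → ℝ) (B : Set Ω) : ℝ :=
  sSup {x | ∃ A ∈ 𝒜, A ⊆ B ∧ x = l A}

/-- λ-atom. -/
def IsLAtom (𝒜 : Set (Set Ω)) (l : Set Ω → ℝ) (B : Set Ω) : Prop :=
  B ∈ 𝒜 ∧ 0 < l B ∧ ∀ A ∈ 𝒜, A ⊆ B → l A = 0 ∨ l (B \ A) = 0

/-- simple 𝒜-measurable function. -/
def IsSimple (𝒜 : Set (Set Ω)) (f : Ω → ℝ) : Prop :=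
  (Set.range f).Finite ∧ ∀ c : ℝ, f ⁻¹' {c} ∈ 𝒜

/-- integral of a simple function. -/
noncomputable def simpleInt (μ : Set Ω → ℝ) (f : Ω → ℝ) : ℝ :=
  ∑ᶠ c : ℝ, c * μ (f ⁻¹' {c})

/-- outer measure associated with l on 𝒜. -/
noncomputable def outerOf (𝒜 : Set (Set Ω)) (l : Set Ω → ℝ) (S : Set Ω) : ℝ :=
  sInf {x | ∃ A ∈ 𝒜, S ⊆ A ∧ x = l A}

/-- Dunford–Schwartz approximating sequence for `f`. -/
def ApproxSeq (𝒜 : Set (Set Ω)) (l : Set Ω → ℝ) (f : Ω → ℝ) (g : ℕ → Ω → ℝ) : Prop :=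
  (∀ n, IsSimple 𝒜 (g n)) ∧
  (∀ ε > (0:ℝ), ∃ N, ∀ p ≥ N, ∀ q ≥ N, simpleInt l (fun x => |g p x - g q x|) < ε) ∧
  (∀ ε > (0:ℝ), Tendsto (fun n => outerOf 𝒜 l {x | ε ≤ |g n x - f x|}) atTop (nhds 0))

/-- membership in L¹(l). -/
def MemL1 (𝒜 : Set (Set Ω)) (l : Set Ω → ℝ) (f : Ω → ℝ) : Prop :=
  ∃ g, ApproxSeq 𝒜 l f g

/-- the Dunford–Schwartz integral. -/
noncomputable def dsInt (𝒜 : Set (Set Ω)) (l : Set Ω → ℝ) (f : Ω → ℝ) : ℝ :=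
  sInf {I | ∃ g, ApproxSeq 𝒜 l f g ∧ Tendsto (fun n => simpleInt l (g n)) atTop (nhds I)}

/-- L¹ seminorm distance. -/
noncomputable def l1dist (𝒜 : Set (Set Ω)) (l : Set Ω → ℝ) (f h : Ω → ℝ) : ℝ :=
  dsInt 𝒜 l (fun x => |f x - h x|)

/-- membership in the L¹(l)-closure of a set C of functions. -/
def InL1Closure (𝒜 : Set (Set Ω)) (l : Set Ω → ℝ) (C : Set (Ω → ℝ)) (f : Ω → ℝ) : Prop :=
  ∀ ε > (0:ℝ), ∃ h ∈ C, l1dist 𝒜 l f h < ε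

/-- the set C = K − Sim(𝒜)₊. -/
def ConeDiff (𝒜 : Set (Set Ω)) (K : Set (Ω → ℝ)) : Set (Ω → ℝ) :=
  {f | ∃ k ∈ K, ∃ s : Ω → ℝ, IsSimple 𝒜 s ∧ (∀ x, 0 ≤ s x) ∧ f = k - s}

/-!
Two atoms either meet in a null set or differ by a null set. By Zorn's lemma choose a maximal
family `M` of atoms with pairwise null intersections; maximality forces every atom to agree with
a member of `M` up to a null set. Finite additivity bounds every finite sum `∑ l B` over `M` by
`l` of the union, hence by the bound of `l`, so `M` is countable. Enumerating `M` as `f 0, f 1, …`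
and passing to `disjointed f` removes only null sets from the first occurrence of each member,
which yields the disjoint family of atoms.
-/

open MeasureTheory
open scoped symmDiff

theorem IsAlg.isSetAlgebra {𝒜 : Set (Set Ω)} (hA : IsAlg 𝒜) : IsSetAlgebra 𝒜 where
  empty_mem := hA.1
  compl_mem := fun s hs => hA.2.2.1 s hs
  union_mem := fun s t hs ht => hA.2.2.2 s hs t ht

theorem MeasureTheory.IsSetAlgebra.symmDiff_mem {𝒜 : Set (Set Ω)} (h𝒜 : IsSetAlgebra 𝒜)
    {A B : Set Ω} (hA : A ∈ 𝒜) (hB : B ∈ 𝒜) : A ∆ B ∈ 𝒜 := by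
  rw [Set.symmDiff_def]
  exact h𝒜.union_mem (h𝒜.sdiff_mem hA hB) (h𝒜.sdiff_mem hB hA)

theorem exists_maximal_pairwise {α : Type*} (T : Set α) (r : α → α → Prop) :
    ∃ M ⊆ T, M.Pairwise r ∧ ∀ x ∈ T, (∀ m ∈ M, x ≠ m → r x m ∧ r m x) → x ∈ M := by
  obtain ⟨M, hM⟩ := zorn_subset {S | S ⊆ T ∧ S.Pairwise r} fun c hc hchain =>
    ⟨⋃₀ c, ⟨sUnion_subset fun s hs => (hc hs).1, hchain.pairwise_sUnion.2 fun s hs => (hc hs).2⟩,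
      fun s hs => subset_sUnion_of_mem hs⟩
  refine ⟨M, hM.1.1, hM.1.2, fun x hxT hx => ?_⟩
  exact hM.2 ⟨insert_subset hxT hM.1.1, pairwise_insert.2 ⟨hM.1.2, hx⟩⟩ (subset_insert x M)
    (mem_insert x M)

section FinitelyAdditive

variable {𝒜 : Set (Set Ω)} {l : Set Ω → ℝ} {A B C : Set Ω}

namespace IsFinAdd

theorem inter_add_diff (hl : IsFinAdd 𝒜 l) (h𝒜 : IsSetAlgebra 𝒜) (hA : A ∈ 𝒜) (hB : B ∈ 𝒜) :
    l (A ∩ B) + l (A \ B) = l A := by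
  rw [← hl.2.1 _ (h𝒜.inter_mem hA hB) _ (h𝒜.sdiff_mem hA hB) disjoint_sdiff_inter.symm,
    inter_union_sdiff]

theorem union_add_inter (hl : IsFinAdd 𝒜 l) (h𝒜 : IsSetAlgebra 𝒜) (hA : A ∈ 𝒜) (hB : B ∈ 𝒜) :
    l (A ∪ B) + l (A ∩ B) = l A + l B := by
  have hunion : l (A ∪ B) = l A + l (B \ A) := by
    rw [← hl.2.1 _ hA _ (h𝒜.sdiff_mem hB hA) disjoint_sdiff_right, union_sdiff_self]
  have hsplit := hl.inter_add_diff h𝒜 hB hA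
  rw [inter_comm] at hsplit
  linarith

theorem symmDiff_eq (hl : IsFinAdd 𝒜 l) (h𝒜 : IsSetAlgebra 𝒜) (hA : A ∈ 𝒜) (hB : B ∈ 𝒜) :
    l (A ∆ B) = l (A \ B) + l (B \ A) := by
  rw [Set.symmDiff_def, hl.2.1 _ (h𝒜.sdiff_mem hA hB) _ (h𝒜.sdiff_mem hB hA) disjoint_sdiff_sdiff]

theorem mono (hl : IsFinAdd 𝒜 l) (h𝒜 : IsSetAlgebra 𝒜) (hpos : IsPos 𝒜 l) (hA : A ∈ 𝒜)
    (hB : B ∈ 𝒜) (hAB : A ⊆ B) : l A ≤ l B := by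
  have hsplit := hl.inter_add_diff h𝒜 hB hA
  rw [inter_eq_right.2 hAB] at hsplit
  linarith [hpos _ (h𝒜.sdiff_mem hB hA)]

theorem union_le (hl : IsFinAdd 𝒜 l) (h𝒜 : IsSetAlgebra 𝒜) (hpos : IsPos 𝒜 l) (hA : A ∈ 𝒜)
    (hB : B ∈ 𝒜) : l (A ∪ B) ≤ l A + l B := by
  linarith [hl.union_add_inter h𝒜 hA hB, hpos _ (h𝒜.inter_mem hA hB)]

theorem biUnion_le (hl : IsFinAdd 𝒜 l) (h𝒜 : IsSetAlgebra 𝒜) (hpos : IsPos 𝒜 l) {ι : Type*}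
    (s : Finset ι) {g : ι → Set Ω} (hg : ∀ i ∈ s, g i ∈ 𝒜) :
    l (⋃ i ∈ s, g i) ≤ ∑ i ∈ s, l (g i) := by
  classical
  induction s using Finset.induction_on with
  | empty => simp [hl.1]
  | insert a s ha ih =>
    rw [Finset.set_biUnion_insert, Finset.sum_insert ha]
    have hs : ∀ i ∈ s, g i ∈ 𝒜 := fun i hi => hg i (Finset.mem_insert_of_mem hi)
    linarith [hl.union_le h𝒜 hpos (hg a (Finset.mem_insert_self a s)) (h𝒜.biUnion_mem s hs), ih hs]

theorem sum_eq_biUnion_of_pairwise_inter_null (hl : IsFinAdd 𝒜 l) (h𝒜 : IsSetAlgebra 𝒜)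
    (hpos : IsPos 𝒜 l) {ι : Type*} (s : Finset ι) {g : ι → Set Ω} (hg : ∀ i ∈ s, g i ∈ 𝒜)
    (hnull : (s : Set ι).Pairwise fun i j => l (g i ∩ g j) = 0) :
    ∑ i ∈ s, l (g i) = l (⋃ i ∈ s, g i) := by
  classical
  induction s using Finset.induction_on with
  | empty => simp [hl.1]
  | insert a s ha ih =>
    rw [Finset.set_biUnion_insert, Finset.sum_insert ha]
    have hs : ∀ i ∈ s, g i ∈ 𝒜 := fun i hi => hg i (Finset.mem_insert_of_mem hi)
    have hga : g a ∈ 𝒜 := hg a (Finset.mem_insert_self a s)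
    have hmeet : l (g a ∩ ⋃ i ∈ s, g i) ≤ 0 := by
      rw [inter_iUnion₂]
      refine (hl.biUnion_le h𝒜 hpos s fun i hi => h𝒜.inter_mem hga (hs i hi)).trans_eq ?_
      refine Finset.sum_eq_zero fun i hi => hnull (Finset.mem_insert_self a s)
        (Finset.mem_insert_of_mem hi) fun h => ha (h ▸ hi)
    have hrest := ih hs (hnull.mono (by simp))
    linarith [hl.union_add_inter h𝒜 hga (h𝒜.biUnion_mem s hs),
      hpos _ (h𝒜.inter_mem hga (h𝒜.biUnion_mem s hs))]

theorem symmDiff_null_trans (hl : IsFinAdd 𝒜 l) (h𝒜 : IsSetAlgebra 𝒜) (hpos : IsPos 𝒜 l)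
    (hA : A ∈ 𝒜) (hB : B ∈ 𝒜) (hC : C ∈ 𝒜) (hAB : l (A ∆ B) = 0) (hBC : l (B ∆ C) = 0) :
    l (A ∆ C) = 0 := by
  have hAB𝒜 := h𝒜.symmDiff_mem hA hB
  have hBC𝒜 := h𝒜.symmDiff_mem hB hC
  have hle := hl.mono h𝒜 hpos (h𝒜.symmDiff_mem hA hC) (h𝒜.union_mem hAB𝒜 hBC𝒜)
    (symmDiff_triangle A B C)
  linarith [hl.union_le h𝒜 hpos hAB𝒜 hBC𝒜, hpos _ (h𝒜.symmDiff_mem hA hC)]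

end IsFinAdd

theorem IsLAtom.inter_null_or_symmDiff_null (hl : IsFinAdd 𝒜 l) (h𝒜 : IsSetAlgebra 𝒜)
    (hB : IsLAtom 𝒜 l B) (hC : IsLAtom 𝒜 l C) : l (B ∩ C) = 0 ∨ l (B ∆ C) = 0 := by
  have hBC := h𝒜.inter_mem hB.1 hC.1
  rcases hB.2.2 _ hBC inter_subset_left with h | hBdiff
  · exact .inl h
  rcases hC.2.2 _ hBC inter_subset_right with h | hCdiff
  · exact .inl h
  rw [sdiff_self_inter] at hBdiff
  rw [inter_comm, sdiff_self_inter] at hCdiff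
  exact .inr (by rw [hl.symmDiff_eq h𝒜 hB.1 hC.1, hBdiff, hCdiff, add_zero])

theorem IsLAtom.of_subset (hl : IsFinAdd 𝒜 l) (h𝒜 : IsSetAlgebra 𝒜) (hpos : IsPos 𝒜 l)
    (hB : IsLAtom 𝒜 l B) (hA : A ∈ 𝒜) (hAB : A ⊆ B) (hApos : 0 < l A) : IsLAtom 𝒜 l A := by
  refine ⟨hA, hApos, fun D hD hDA => (hB.2.2 D hD (hDA.trans hAB)).imp_right fun hnull => ?_⟩
  have hle := hl.mono h𝒜 hpos (h𝒜.sdiff_mem hA hD) (h𝒜.sdiff_mem hB.1 hD)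
    (sdiff_subset_sdiff_left hAB)
  linarith [hpos _ (h𝒜.sdiff_mem hA hD)]

theorem countable_of_pairwise_inter_null (hl : IsFinAdd 𝒜 l) (h𝒜 : IsSetAlgebra 𝒜)
    (hpos : IsPos 𝒜 l) {S : Set (Set Ω)} (hS𝒜 : S ⊆ 𝒜) (hSpos : ∀ B ∈ S, 0 < l B)
    (hnull : S.Pairwise fun B C => l (B ∩ C) = 0) : S.Countable := by
  obtain ⟨c, hc⟩ := hl.2.2
  have hsum : Summable fun B : S => l B := by
    refine summable_of_sum_le (c := c) (fun B => (hSpos B B.2).le) fun u => ?_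
    have hu : ∀ B ∈ u, (B : Set Ω) ∈ 𝒜 := fun B _ => hS𝒜 B.2
    calc ∑ B ∈ u, l B = l (⋃ B ∈ u, (B : Set Ω)) :=
          hl.sum_eq_biUnion_of_pairwise_inter_null h𝒜 hpos u hu
            fun B _ C _ hBC => hnull B.2 C.2 (Subtype.coe_ne_coe.2 hBC)
      _ ≤ c := (le_abs_self _).trans (hc _ (h𝒜.biUnion_mem u hu))
  have hsupp : Function.support (fun B : S => l B) = univ :=
    eq_univ_of_forall fun B => (hSpos B B.2).ne'
  rw [← countable_coe_iff, ← countable_univ_iff, ← hsupp]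
  exact hsum.countable_support

theorem disjointed_mem (h𝒜 : IsSetAlgebra 𝒜) {f : ℕ → Set Ω} (hf : ∀ n, f n ∈ 𝒜) (n : ℕ) :
    disjointed f n ∈ 𝒜 := by
  rw [disjointed_apply, Finset.sup_set_eq_biUnion]
  exact h𝒜.sdiff_mem (hf n) (h𝒜.biUnion_mem _ fun i _ => hf i)

theorem diff_disjointed_null (hl : IsFinAdd 𝒜 l) (h𝒜 : IsSetAlgebra 𝒜) (hpos : IsPos 𝒜 l)
    {f : ℕ → Set Ω} (hf : ∀ n, f n ∈ 𝒜) (hnull : ∀ m n, f m ≠ f n → l (f m ∩ f n) = 0) {n : ℕ}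
    (hfirst : ∀ j < n, f j ≠ f n) : l (f n \ disjointed f n) = 0 := by
  rw [disjointed_apply, Finset.sup_set_eq_biUnion, sdiff_sdiff_right_self, inter_iUnion₂]
  have hle := hl.biUnion_le h𝒜 hpos (Finset.Iio n) fun j _ => h𝒜.inter_mem (hf n) (hf j)
  rw [Finset.sum_eq_zero fun j hj => hnull n j (hfirst j (Finset.mem_Iio.1 hj)).symm] at hle
  linarith [hpos _ (h𝒜.biUnion_mem (Finset.Iio n) fun j _ => h𝒜.inter_mem (hf n) (hf j))]

theorem exists_pairwise_disjoint_atoms_of_seq (hl : IsFinAdd 𝒜 l) (h𝒜 : IsSetAlgebra 𝒜)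
    (hpos : IsPos 𝒜 l) {f : ℕ → Set Ω} (hf : ∀ n, IsLAtom 𝒜 l (f n))
    (hnull : ∀ m n, f m ≠ f n → l (f m ∩ f n) = 0) :
    ∃ G : Set (Set Ω), G.Countable ∧ (∀ g ∈ G, IsLAtom 𝒜 l g) ∧ G.Pairwise Disjoint ∧
      ∀ n, ∃ g ∈ G, l (f n ∆ g) = 0 := by
  have hf𝒜 : ∀ n, f n ∈ 𝒜 := fun n => (hf n).1
  refine ⟨{g ∈ range (disjointed f) | 0 < l g}, (countable_range _).mono (sep_subset _ _),
    ?_, ?_, ?_⟩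
  · rintro _ ⟨⟨n, rfl⟩, hn⟩
    exact (hf n).of_subset hl h𝒜 hpos (disjointed_mem h𝒜 hf𝒜 n) (disjointed_le f n) hn
  · rintro _ ⟨⟨m, rfl⟩, -⟩ _ ⟨⟨n, rfl⟩, -⟩ hne
    exact disjoint_disjointed f fun h => hne (congrArg _ h)
  · intro k
    have hk : ∃ n, f n = f k := ⟨k, rfl⟩
    set n := Nat.find hk
    have hfirst : ∀ j < n, f j ≠ f n := fun j hj h =>
      Nat.find_min hk hj (h.trans (Nat.find_spec hk))
    have hD𝒜 := disjointed_mem h𝒜 hf𝒜 n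
    have hdiff := diff_disjointed_null hl h𝒜 hpos hf𝒜 hnull hfirst
    have hsymm : l (f n ∆ disjointed f n) = 0 := by
      rw [hl.symmDiff_eq h𝒜 (hf𝒜 n) hD𝒜, hdiff, sdiff_eq_empty.2 (disjointed_le f n), hl.1,
        add_zero]
    have hsplit := hl.inter_add_diff h𝒜 (hf𝒜 n) hD𝒜
    rw [inter_eq_right.2 (disjointed_le f n), hdiff, add_zero] at hsplit
    refine ⟨disjointed f n, ⟨⟨n, rfl⟩, hsplit ▸ (hf n).2.1⟩, ?_⟩
    rwa [← Nat.find_spec hk]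

end FinitelyAdditive

/-- Mukherjee–Summers: countable disjoint family of atoms
exhausting all atoms up to λ-null symmetric difference. -/
theorem mukherjee_summers {Ω : Type*} (𝒜 : Set (Set Ω)) (hA : IsAlg 𝒜)
    (l : Set Ω → ℝ) (hl : IsFinAdd 𝒜 l) (hpos : IsPos 𝒜 l)
    (hatom : ∃ B, IsLAtom 𝒜 l B) :
    ∃ G : Set (Set Ω), G.Countable ∧ (∀ g ∈ G, IsLAtom 𝒜 l g) ∧
      G.Pairwise Disjoint ∧
      ∀ B : Set Ω, IsLAtom 𝒜 l B → ∃ g ∈ G, l (symmDiff B g) = 0 := by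
  have h𝒜 := hA.isSetAlgebra
  obtain ⟨M, hMatom, hMnull, hMmax⟩ :=
    exists_maximal_pairwise {B | IsLAtom 𝒜 l B} fun B C => l (B ∩ C) = 0
  have hcover : ∀ B, IsLAtom 𝒜 l B → ∃ m ∈ M, l (B ∆ m) = 0 := by
    intro B hB
    by_contra! hfar
    have hBM : B ∈ M := hMmax B hB fun m hm _ => by
      have hBm := (hB.inter_null_or_symmDiff_null hl h𝒜 (hMatom hm)).resolve_right (hfar m hm)
      exact ⟨hBm, by rwa [inter_comm]⟩
    exact hfar B hBM (by rw [symmDiff_self, bot_eq_empty, hl.1])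
  have hMc : M.Countable := countable_of_pairwise_inter_null hl h𝒜 hpos
    (fun B hB => (hMatom hB).1) (fun B hB => (hMatom hB).2.1) hMnull
  obtain ⟨B₀, hB₀⟩ := hatom
  obtain ⟨m₀, hm₀, -⟩ := hcover B₀ hB₀
  obtain ⟨f, rfl⟩ := hMc.exists_eq_range ⟨m₀, hm₀⟩
  obtain ⟨G, hGc, hGatom, hGdisj, hGcover⟩ := exists_pairwise_disjoint_atoms_of_seq hl h𝒜 hpos
    (fun n => hMatom (mem_range_self n))
    fun m n hmn => hMnull (mem_range_self m) (mem_range_self n) hmn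
  refine ⟨G, hGc, hGatom, hGdisj, fun B hB => ?_⟩
  obtain ⟨_, ⟨n, rfl⟩, hBn⟩ := hcover B hB
  obtain ⟨g, hg, hng⟩ := hGcover n
  exact ⟨g, hg, hl.symmDiff_null_trans h𝒜 hpos hB.1 (hMatom (mem_range_self n)).1
    (hGatom g hg).1 hBn hng⟩
end

section
/- Let A be an algebra over Ω, λ, μ, ν ∈ ba(A) with λ, ν positive. Suppose μ ≪ λ, ν ⊥ |μ| (i.e., for every ε > 0 there exists B ∈ A with |μ|(Bᶜ) + ν(B) < ε), and λ = ρ + ν with ρ ∈ ba(A)₊. Then μ ≪ ρ. -/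
open Set Filter Topology

variable {Ω : Type*}

/-!
Choose `B ∈ 𝒜` with `|μ|(Bᶜ)` and `ν(B)` both small. For `E ∈ 𝒜`, the part `E ∩ Bᶜ` carries
little `|μ|`, while `λ(E ∩ B) ≤ ρ(E) + ν(B)`, so `|μ|(E ∩ B)` is small by `μ ≪ λ` once `ρ(E)` is.
The total variation is additive on disjoint sets of `𝒜`, which glues the two pieces.
-/

section Algebra

variable {𝒜 : Set (Set Ω)} {A B : Set Ω}

lemma IsAlg.empty_mem (hA : IsAlg 𝒜) : ∅ ∈ 𝒜 := hA.1

lemma IsAlg.compl_mem (hA : IsAlg 𝒜) (hAm : A ∈ 𝒜) : Aᶜ ∈ 𝒜 := hA.2.2.1 A hAm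

lemma IsAlg.union_mem (hA : IsAlg 𝒜) (hAm : A ∈ 𝒜) (hBm : B ∈ 𝒜) : A ∪ B ∈ 𝒜 :=
  hA.2.2.2 A hAm B hBm

lemma IsAlg.inter_mem (hA : IsAlg 𝒜) (hAm : A ∈ 𝒜) (hBm : B ∈ 𝒜) : A ∩ B ∈ 𝒜 := by
  simpa using hA.compl_mem (hA.union_mem (hA.compl_mem hAm) (hA.compl_mem hBm))

lemma IsAlg.diff_mem (hA : IsAlg 𝒜) (hAm : A ∈ 𝒜) (hBm : B ∈ 𝒜) : A \ B ∈ 𝒜 :=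
  hA.inter_mem hAm (hA.compl_mem hBm)

end Algebra

section FinAdd

variable {𝒜 : Set (Set Ω)} {μ : Set Ω → ℝ} {A B E : Set Ω}

lemma IsFinAdd.map_empty (hμ : IsFinAdd 𝒜 μ) : μ ∅ = 0 := hμ.1

lemma IsFinAdd.map_union (hμ : IsFinAdd 𝒜 μ) (hAm : A ∈ 𝒜) (hBm : B ∈ 𝒜) (hd : Disjoint A B) :
    μ (A ∪ B) = μ A + μ B :=
  hμ.2.1 A hAm B hBm hd

lemma IsFinAdd.map_inter_add_map_diff (hA : IsAlg 𝒜) (hμ : IsFinAdd 𝒜 μ) (hEm : E ∈ 𝒜)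
    (hBm : B ∈ 𝒜) : μ (E ∩ B) + μ (E \ B) = μ E := by
  rw [← hμ.map_union (hA.inter_mem hEm hBm) (hA.diff_mem hEm hBm) Set.disjoint_sdiff_inter.symm,
    Set.inter_union_sdiff]

lemma IsFinAdd.mono_of_isPos (hA : IsAlg 𝒜) (hμ : IsFinAdd 𝒜 μ) (hpos : IsPos 𝒜 μ)
    (hAm : A ∈ 𝒜) (hBm : B ∈ 𝒜) (hBA : B ⊆ A) : μ B ≤ μ A := by
  have := hμ.map_inter_add_map_diff hA hAm hBm
  rw [Set.inter_eq_self_of_subset_right hBA] at this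
  linarith [hpos _ (hA.diff_mem hAm hBm)]

end FinAdd

section TotalVariation

variable {𝒜 : Set (Set Ω)} {μ : Set Ω → ℝ} {A B E : Set Ω}

lemma IsFinAdd.bddAbove_tv (hA : IsAlg 𝒜) (hμ : IsFinAdd 𝒜 μ) (hEm : E ∈ 𝒜) :
    BddAbove {x | ∃ B ∈ 𝒜, B ⊆ E ∧ x = μ B - μ (E \ B)} := by
  obtain ⟨K, hK⟩ := hμ.2.2
  refine ⟨2 * K, ?_⟩
  rintro _ ⟨B, hBm, -, rfl⟩
  linarith [(abs_le.1 (hK B hBm)).2, (abs_le.1 (hK _ (hA.diff_mem hEm hBm))).1]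

lemma IsFinAdd.le_tv (hA : IsAlg 𝒜) (hμ : IsFinAdd 𝒜 μ) (hEm : E ∈ 𝒜) (hBm : B ∈ 𝒜)
    (hBE : B ⊆ E) : μ B - μ (E \ B) ≤ tv 𝒜 μ E :=
  le_csSup (hμ.bddAbove_tv hA hEm) ⟨B, hBm, hBE, rfl⟩

lemma IsFinAdd.le_tv_self (hA : IsAlg 𝒜) (hμ : IsFinAdd 𝒜 μ) (hEm : E ∈ 𝒜) :
    μ E ≤ tv 𝒜 μ E := by
  simpa [hμ.map_empty] using hμ.le_tv hA hEm hEm subset_rfl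

lemma IsFinAdd.tv_nonneg (hA : IsAlg 𝒜) (hμ : IsFinAdd 𝒜 μ) (hEm : E ∈ 𝒜) :
    0 ≤ tv 𝒜 μ E := by
  have := hμ.le_tv hA hEm hA.empty_mem (Set.empty_subset E)
  rw [hμ.map_empty, Set.sdiff_empty] at this
  linarith [hμ.le_tv_self hA hEm]

lemma tv_nonempty (hA : IsAlg 𝒜) (E : Set Ω) :
    {x | ∃ B ∈ 𝒜, B ⊆ E ∧ x = μ B - μ (E \ B)}.Nonempty :=
  ⟨_, ∅, hA.empty_mem, Set.empty_subset E, rfl⟩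

lemma IsFinAdd.tv_eq_of_isPos (hA : IsAlg 𝒜) (hμ : IsFinAdd 𝒜 μ) (hpos : IsPos 𝒜 μ)
    (hEm : E ∈ 𝒜) : tv 𝒜 μ E = μ E := by
  refine le_antisymm (csSup_le (tv_nonempty hA E) ?_) (hμ.le_tv_self hA hEm)
  rintro _ ⟨B, hBm, hBE, rfl⟩
  linarith [hμ.mono_of_isPos hA hpos hEm hBm hBE, hpos _ (hA.diff_mem hEm hBm)]

lemma IsFinAdd.tv_union_le (hA : IsAlg 𝒜) (hμ : IsFinAdd 𝒜 μ) (hAm : A ∈ 𝒜) (hBm : B ∈ 𝒜)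
    (hd : Disjoint A B) : tv 𝒜 μ (A ∪ B) ≤ tv 𝒜 μ A + tv 𝒜 μ B := by
  refine csSup_le (tv_nonempty hA _) ?_
  rintro _ ⟨C, hCm, hCAB, rfl⟩
  have hsplit : C = C ∩ A ∪ C ∩ B := by
    rw [← Set.inter_union_distrib_left, Set.inter_eq_self_of_subset_left hCAB]
  have hA' := hμ.le_tv hA hAm (hA.inter_mem hCm hAm) Set.inter_subset_right
  have hB' := hμ.le_tv hA hBm (hA.inter_mem hCm hBm) Set.inter_subset_right
  rw [Set.sdiff_inter_self_eq_sdiff] at hA' hB'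
  rw [hsplit, hμ.map_union (hA.inter_mem hCm hAm) (hA.inter_mem hCm hBm)
      (hd.mono Set.inter_subset_right Set.inter_subset_right), ← hsplit, Set.union_sdiff_distrib,
    hμ.map_union (hA.diff_mem hAm hCm) (hA.diff_mem hBm hCm)
      (hd.mono Set.sdiff_subset Set.sdiff_subset)]
  linarith

lemma IsFinAdd.tv_add_tv_le (hA : IsAlg 𝒜) (hμ : IsFinAdd 𝒜 μ) (hAm : A ∈ 𝒜) (hBm : B ∈ 𝒜)
    (hd : Disjoint A B) : tv 𝒜 μ A + tv 𝒜 μ B ≤ tv 𝒜 μ (A ∪ B) := by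
  rw [← le_sub_iff_add_le]
  refine csSup_le (tv_nonempty hA _) ?_
  rintro _ ⟨C, hCm, hCA, rfl⟩
  rw [le_sub_iff_add_le, ← le_sub_iff_add_le']
  refine csSup_le (tv_nonempty hA _) ?_
  rintro _ ⟨D, hDm, hDB, rfl⟩
  rw [le_sub_iff_add_le']
  have hdiff : (A ∪ B) \ (C ∪ D) = A \ C ∪ B \ D := by
    ext x
    have : x ∈ A → x ∉ B := fun h => Set.disjoint_left.1 hd h
    have := @hCA x
    have := @hDB x
    simp only [Set.mem_union, Set.mem_sdiff]
    tauto
  have := hμ.le_tv hA (hA.union_mem hAm hBm) (hA.union_mem hCm hDm) (Set.union_subset_union hCA hDB)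
  rw [hdiff, hμ.map_union hCm hDm (hd.mono hCA hDB),
    hμ.map_union (hA.diff_mem hAm hCm) (hA.diff_mem hBm hDm)
      (hd.mono Set.sdiff_subset Set.sdiff_subset)] at this
  linarith

lemma IsFinAdd.tv_union (hA : IsAlg 𝒜) (hμ : IsFinAdd 𝒜 μ) (hAm : A ∈ 𝒜) (hBm : B ∈ 𝒜)
    (hd : Disjoint A B) : tv 𝒜 μ (A ∪ B) = tv 𝒜 μ A + tv 𝒜 μ B :=
  le_antisymm (hμ.tv_union_le hA hAm hBm hd) (hμ.tv_add_tv_le hA hAm hBm hd)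

lemma IsFinAdd.tv_mono (hA : IsAlg 𝒜) (hμ : IsFinAdd 𝒜 μ) (hAm : A ∈ 𝒜) (hBm : B ∈ 𝒜)
    (hAB : A ⊆ B) : tv 𝒜 μ A ≤ tv 𝒜 μ B := by
  have := hμ.tv_union hA hAm (hA.diff_mem hBm hAm) Set.disjoint_sdiff_right
  rw [Set.union_sdiff_cancel hAB] at this
  linarith [hμ.tv_nonneg hA (hA.diff_mem hBm hAm)]

lemma IsFinAdd.tv_inter_add_tv_inter_compl (hA : IsAlg 𝒜) (hμ : IsFinAdd 𝒜 μ) (hEm : E ∈ 𝒜)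
    (hBm : B ∈ 𝒜) : tv 𝒜 μ (E ∩ B) + tv 𝒜 μ (E ∩ Bᶜ) = tv 𝒜 μ E := by
  rw [← hμ.tv_union hA (hA.inter_mem hEm hBm) (hA.inter_mem hEm (hA.compl_mem hBm))
    (disjoint_compl_right.mono Set.inter_subset_right Set.inter_subset_right),
    Set.inter_union_compl]

end TotalVariation

/-- key Halmos–Savage step: μ ≪ λ, ν ⊥ |μ|, λ = ρ + ν ⟹ μ ≪ ρ. -/
theorem ac_passes_to_part {Ω : Type*} (𝒜 : Set (Set Ω)) (hA : IsAlg 𝒜)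
    (l μ ν ρ : Set Ω → ℝ)
    (hl : IsFinAdd 𝒜 l) (hμ : IsFinAdd 𝒜 μ) (hν : IsFinAdd 𝒜 ν) (hρ : IsFinAdd 𝒜 ρ)
    (hlpos : IsPos 𝒜 l) (hνpos : IsPos 𝒜 ν) (hρpos : IsPos 𝒜 ρ)
    (hac : AC 𝒜 μ l)
    (hsing : ∀ ε > (0:ℝ), ∃ B ∈ 𝒜, tv 𝒜 μ Bᶜ + ν B < ε)
    (hdec : ∀ A ∈ 𝒜, l A = ρ A + ν A) :
    AC 𝒜 μ ρ := by
  intro ε hε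
  obtain ⟨δ, hδ, hμl⟩ := hac (ε / 2) (half_pos hε)
  obtain ⟨B, hBm, hB⟩ := hsing (min (ε / 2) (δ / 2)) (lt_min (half_pos hε) (half_pos hδ))
  have hμBc := (le_add_of_nonneg_right (hνpos B hBm)).trans_lt (hB.trans_le (min_le_left _ _))
  have hνB := (le_add_of_nonneg_left (hμ.tv_nonneg hA (hA.compl_mem hBm))).trans_lt
    (hB.trans_le (min_le_right _ _))
  refine ⟨δ / 2, half_pos hδ, fun E hEm hρE => ?_⟩
  have hEB := hA.inter_mem hEm hBm
  have hlEB : tv 𝒜 l (E ∩ B) < δ := calc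
    tv 𝒜 l (E ∩ B) = ρ (E ∩ B) + ν (E ∩ B) := by rw [hl.tv_eq_of_isPos hA hlpos hEB, hdec _ hEB]
    _ ≤ tv 𝒜 ρ E + ν B := add_le_add
      ((hρ.mono_of_isPos hA hρpos hEm hEB Set.inter_subset_left).trans (hρ.le_tv_self hA hEm))
      (hν.mono_of_isPos hA hνpos hBm hEB Set.inter_subset_right)
    _ < δ := by linarith
  have hμEBc : tv 𝒜 μ (E ∩ Bᶜ) ≤ tv 𝒜 μ Bᶜ :=
    hμ.tv_mono hA (hA.inter_mem hEm (hA.compl_mem hBm)) (hA.compl_mem hBm) Set.inter_subset_right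
  rw [← hμ.tv_inter_add_tv_inter_compl hA hEm hBm]
  linarith [hμl _ hEB hlEB]
end
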